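/- Let A be a symmetric i×i matrix, D a symmetric (4−i)×(4−i) matrix, and C a (4−i)×i matrix, all with entries in a 3-dimensional space of linear forms. Over a discrete valuation ring with uniformizer a, the family of triples given by the matrices φ_a = [[A, a·Cᵗ],[C, D]], ψ_a = [[I, 0],[0, a·I]], ψ'_a = [[a·I, 0],[0, I]] satisfies: for a invertible, ψ_a and ψ'_a are invertible and proportional inverses of each other (ψ'_a ∘ ψ_a = a·I and ψ_a ∘ ψ'_a = a·I), the matrix ψ_a ∘ φ_a is symmetric, and the matrix φ_aᵗ ∘ ψ'_aᵗ-type composite is symmetric; at a = 0 the family specializes to (φ, ψ, ψ') = ([[A,0],[C,D]], [[I,0],[0,0]], [[0,0],[0,I]]) where ψ has rank i and ψ' has rank 4−i with ψ' ∘ ψ = 0 and ψ ∘ ψ' = 0. -/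

import Mathlib

/-!
Multiplying `φ_s` on the left by `ψ_s = diag(1, s)` scales its lower blocks by `s`, which turns
the off-diagonal pair `(s • Cᵀ, C)` into the transposed pair `(s • Cᵀ, s • C)`; symmetry of
`A` and `D` does the rest, and `ψ'_s * φ_sᵀ` is handled the same way. The product `ψ'_s ψ_s`
is the scalar `s`, so both factors are invertible when `s` is a unit and multiply to zero at
`s = 0`. The limits `diag(1, 0)` and `diag(0, 1)` are idempotents `E * B` with `B * E = 1`,
which pins down their ranks over any commutative ring with the strong rank condition.
-/

open Matrix MvPolynomial

namespace Matrix

variable {R : Type*} [CommRing R] {l m n : Type*} [Fintype l] [Fintype m] [Fintype n]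

theorem rank_mul_eq_card_of_mul_eq_one [DecidableEq m] [StrongRankCondition R]
    {E : Matrix l m R} {B : Matrix m l R} (h : B * E = 1) : (E * B).rank = Fintype.card m := by
  refine le_antisymm ((rank_mul_le_left E B).trans E.rank_le_card_width) ?_
  calc Fintype.card m = (B * (E * B) * E).rank := by
        rw [← Matrix.mul_assoc, h, Matrix.one_mul, h, rank_one]
    _ ≤ (E * B).rank := (rank_mul_le_left _ E).trans (rank_mul_le_right B _)

theorem rank_fromBlocks_one_zero_zero_zero [DecidableEq m] [StrongRankCondition R] :
    (fromBlocks (1 : Matrix m m R) 0 0 (0 : Matrix n n R)).rank = Fintype.card m := by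
  have hEB : fromRows (1 : Matrix m m R) (0 : Matrix n m R) * fromCols 1 (0 : Matrix m n R)
      = fromBlocks (1 : Matrix m m R) 0 0 (0 : Matrix n n R) := by
    rw [fromRows_mul_fromCols]
    simp
  rw [← hEB, rank_mul_eq_card_of_mul_eq_one]
  simp [fromCols_mul_fromRows]

theorem rank_fromBlocks_zero_zero_zero_one [DecidableEq n] [StrongRankCondition R] :
    (fromBlocks (0 : Matrix m m R) 0 0 (1 : Matrix n n R)).rank = Fintype.card n := by
  rw [← rank_fromBlocks_one_zero_zero_zero (R := R) (m := n) (n := m),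
    ← fromBlocks_submatrix_sum_swap_sum_swap (0 : Matrix m m R)]
  exact (rank_submatrix _ (Equiv.sumComm n m) (Equiv.sumComm n m)).symm

theorem isSymm_fromBlocks_one_zero_zero_smul_one_mul [DecidableEq m] [DecidableEq n]
    {A : Matrix m m R} {C : Matrix n m R} {D : Matrix n n R} (hA : A.IsSymm) (hD : D.IsSymm)
    (t : R) : (fromBlocks 1 0 0 (t • 1) * fromBlocks A (t • Cᵀ) C D).IsSymm := by
  have hprod : fromBlocks 1 0 0 (t • 1) * fromBlocks A (t • Cᵀ) C D
      = fromBlocks A (t • Cᵀ) (t • C) (t • D) := by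
    simp [fromBlocks_multiply]
  rw [hprod]
  exact hA.fromBlocks (by simp) (hD.smul t)

theorem isSymm_fromBlocks_smul_one_zero_zero_one_mul_transpose [DecidableEq m] [DecidableEq n]
    {A : Matrix m m R} {C : Matrix n m R} {D : Matrix n n R} (hA : A.IsSymm) (hD : D.IsSymm)
    (t : R) : (fromBlocks (t • 1) 0 0 1 * (fromBlocks A (t • Cᵀ) C D)ᵀ).IsSymm := by
  have hprod : fromBlocks (t • 1) 0 0 1 * (fromBlocks A (t • Cᵀ) C D)ᵀ
      = fromBlocks (t • A) (t • Cᵀ) (t • C) D := by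
    simp [fromBlocks_transpose, fromBlocks_multiply, hA.eq, hD.eq]
  rw [hprod]
  exact (hA.smul t).fromBlocks (by simp) hD

end Matrix

theorem degeneration_of_triples_general
    (A : Type*) [CommRing A] [IsDomain A]
    (a : A)
    (i : ℕ)
    (A₀ : Matrix (Fin i) (Fin i) (MvPolynomial (Fin 3) A))
    (C₀ : Matrix (Fin (4 - i)) (Fin i) (MvPolynomial (Fin 3) A))
    (D₀ : Matrix (Fin (4 - i)) (Fin (4 - i)) (MvPolynomial (Fin 3) A))
    (hA₀ : A₀ᵀ = A₀) (hD₀ : D₀ᵀ = D₀)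
    -- the family, parametrized by s : A
    (φ : A → Matrix (Fin i ⊕ Fin (4 - i)) (Fin i ⊕ Fin (4 - i)) (MvPolynomial (Fin 3) A))
    (ψ ψ' : A → Matrix (Fin i ⊕ Fin (4 - i)) (Fin i ⊕ Fin (4 - i)) (MvPolynomial (Fin 3) A))
    (hφ : ∀ s, φ s = Matrix.fromBlocks A₀ ((MvPolynomial.C s : MvPolynomial (Fin 3) A) • C₀ᵀ) C₀ D₀)
    (hψ : ∀ s, ψ s = Matrix.fromBlocks 1 0 0 ((MvPolynomial.C s : MvPolynomial (Fin 3) A) • 1))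
    (hψ' : ∀ s, ψ' s = Matrix.fromBlocks ((MvPolynomial.C s : MvPolynomial (Fin 3) A) • 1) 0 0 1) :
    (∀ s : A, ψ' s * ψ s = (MvPolynomial.C s : MvPolynomial (Fin 3) A) • 1 ∧ ψ s * ψ' s = (MvPolynomial.C s : MvPolynomial (Fin 3) A) • 1) ∧
    (IsUnit a → IsUnit (ψ a) ∧ IsUnit (ψ' a)) ∧
    (∀ s : A, (ψ s * φ s)ᵀ = ψ s * φ s) ∧
    (∀ s : A, (ψ' s * (φ s)ᵀ)ᵀ = ψ' s * (φ s)ᵀ) ∧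
    (φ 0 = Matrix.fromBlocks A₀ 0 C₀ D₀ ∧
      ψ 0 = Matrix.fromBlocks 1 0 0 0 ∧ ψ' 0 = Matrix.fromBlocks 0 0 0 1 ∧
      (ψ 0).rank = i ∧ (ψ' 0).rank = 4 - i ∧
      ψ' 0 * ψ 0 = 0 ∧ ψ 0 * ψ' 0 = 0) := by
  have hscalar : ∀ s : A, ψ' s * ψ s = (C s : MvPolynomial (Fin 3) A) • 1 ∧
      ψ s * ψ' s = (C s : MvPolynomial (Fin 3) A) • 1 := fun s => by
    constructor <;> simp [hψ, hψ', fromBlocks_multiply, ← fromBlocks_one, fromBlocks_smul]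
  have hunit (hu : IsUnit a) : IsUnit ((C a : MvPolynomial (Fin 3) A) •
      (1 : Matrix (Fin i ⊕ Fin (4 - i)) (Fin i ⊕ Fin (4 - i)) (MvPolynomial (Fin 3) A))) := by
    rw [← Algebra.algebraMap_eq_smul_one]
    exact (hu.map C).map _
  refine ⟨hscalar, fun hu => ⟨?_, ?_⟩, fun s => ?_, fun s => ?_, by simp [hφ], by simp [hψ],
    by simp [hψ'], ?_, ?_, by simp [(hscalar 0).1], by simp [(hscalar 0).2]⟩
  · exact isUnit_of_mul_isUnit_right ((hscalar a).1 ▸ hunit hu)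
  · exact isUnit_of_mul_isUnit_left ((hscalar a).1 ▸ hunit hu)
  · rw [hψ, hφ]
    exact isSymm_fromBlocks_one_zero_zero_smul_one_mul hA₀ hD₀ _
  · rw [hψ', hφ]
    exact isSymm_fromBlocks_smul_one_zero_zero_one_mul_transpose hA₀ hD₀ _
  · simpa [hψ] using rank_fromBlocks_one_zero_zero_zero (R := MvPolynomial (Fin 3) A)
      (m := Fin i) (n := Fin (4 - i))
  · simpa [hψ'] using rank_fromBlocks_zero_zero_zero_one (R := MvPolynomial (Fin 3) A)
      (m := Fin i) (n := Fin (4 - i))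

/-- Degeneration of triples: over a discrete valuation ring `A` with uniformizer `a`,
consider block matrices (blocks of sizes `i` and `4−i`, `1 ≤ i ≤ 3`) whose entries are
linear forms in 3 variables (polynomials in `MvPolynomial (Fin 3) A`), with `A₀`, `D₀`
symmetric.  The family `φ_s = [[A₀, s·C₀ᵀ],[C₀, D₀]]`, `ψ_s = [[I,0],[0,s·I]]`,
`ψ'_s = [[s·I,0],[0,I]]` satisfies: `ψ'_s ∘ ψ_s = s·I = ψ_s ∘ ψ'_s` (so for `s = a`
invertible, `ψ_a`, `ψ'_a` are invertible and proportional inverses of each other),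
`ψ_s ∘ φ_s` is symmetric and `ψ'_s ∘ φ_sᵀ` is symmetric; and at `s = 0` the family
specializes to `(φ, ψ, ψ') = ([[A₀,0],[C₀,D₀]], [[I,0],[0,0]], [[0,0],[0,I]])` where
`ψ` has rank `i`, `ψ'` has rank `4−i`, and `ψ' ∘ ψ = 0 = ψ ∘ ψ'`. -/
theorem degeneration_of_triples
    (A : Type*) [CommRing A] [IsDomain A] [IsDiscreteValuationRing A]
    (a : A) (ha : Irreducible a)
    (i : ℕ) (h1 : 1 ≤ i) (h3 : i ≤ 3)
    (A₀ : Matrix (Fin i) (Fin i) (MvPolynomial (Fin 3) A))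
    (C₀ : Matrix (Fin (4 - i)) (Fin i) (MvPolynomial (Fin 3) A))
    (D₀ : Matrix (Fin (4 - i)) (Fin (4 - i)) (MvPolynomial (Fin 3) A))
    (hA₀ : A₀ᵀ = A₀) (hD₀ : D₀ᵀ = D₀)
    (hA₀h : ∀ p q, (A₀ p q).IsHomogeneous 1)
    (hC₀h : ∀ p q, (C₀ p q).IsHomogeneous 1)
    (hD₀h : ∀ p q, (D₀ p q).IsHomogeneous 1)
    -- the family, parametrized by s : A
    (φ : A → Matrix (Fin i ⊕ Fin (4 - i)) (Fin i ⊕ Fin (4 - i)) (MvPolynomial (Fin 3) A))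
    (ψ ψ' : A → Matrix (Fin i ⊕ Fin (4 - i)) (Fin i ⊕ Fin (4 - i)) (MvPolynomial (Fin 3) A))
    (hφ : ∀ s, φ s = Matrix.fromBlocks A₀ ((MvPolynomial.C s : MvPolynomial (Fin 3) A) • C₀ᵀ) C₀ D₀)
    (hψ : ∀ s, ψ s = Matrix.fromBlocks 1 0 0 ((MvPolynomial.C s : MvPolynomial (Fin 3) A) • 1))
    (hψ' : ∀ s, ψ' s = Matrix.fromBlocks ((MvPolynomial.C s : MvPolynomial (Fin 3) A) • 1) 0 0 1) :
    (∀ s : A, ψ' s * ψ s = (MvPolynomial.C s : MvPolynomial (Fin 3) A) • 1 ∧ ψ s * ψ' s = (MvPolynomial.C s : MvPolynomial (Fin 3) A) • 1) ∧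
    (IsUnit a → IsUnit (ψ a) ∧ IsUnit (ψ' a)) ∧
    (∀ s : A, (ψ s * φ s)ᵀ = ψ s * φ s) ∧
    (∀ s : A, (ψ' s * (φ s)ᵀ)ᵀ = ψ' s * (φ s)ᵀ) ∧
    (φ 0 = Matrix.fromBlocks A₀ 0 C₀ D₀ ∧
      ψ 0 = Matrix.fromBlocks 1 0 0 0 ∧ ψ' 0 = Matrix.fromBlocks 0 0 0 1 ∧
      (ψ 0).rank = i ∧ (ψ' 0).rank = 4 - i ∧
      ψ' 0 * ψ 0 = 0 ∧ ψ 0 * ψ' 0 = 0) :=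
  degeneration_of_triples_general A a i A₀ C₀ D₀ hA₀ hD₀ φ ψ ψ' hφ hψ hψ'
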